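/- arXiv:2403.10189 — 3 statements merged into one kernel-verified Lean document; each statement's English description precedes it below -/
import Mathlib

section
/- There is a bijection between partitions of n with exactly r even parts and s ≥ 1 odd parts, distinct odd parts, smallest even part ≥ 2(r+s), and smallest odd part equal to 1, and partitions of n−2(r+s)+1 with exactly r even parts and s−1 odd parts, distinct odd parts, smallest even part ≥ 2(r+s−1), and smallest odd part ≥ 1; the bijection removes the part 1 and subtracts 2 from every other part. -/
/-- Odd parts are pairwise distinct. -/
def distinctOddParts (m : Multiset ℕ) : Prop := ∀ a, Odd a → m.count a ≤ 1

/-- Every even part is at least `k` (vacuous if no even part). -/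
def minEvenGe (m : Multiset ℕ) (k : ℕ) : Prop := ∀ a ∈ m, Even a → k ≤ a

/-- Every odd part is at least `k` (vacuous if no odd part). -/
def minOddGe (m : Multiset ℕ) (k : ℕ) : Prop := ∀ a ∈ m, Odd a → k ≤ a

/-- No two parts are equal or consecutive, and no two even parts are equal or
consecutive even numbers: parts pairwise differ by at least 2, even parts by at least 4. -/
def gapCond (m : Multiset ℕ) : Prop :=
  (∀ a, m.count a ≤ 1) ∧ (∀ a ∈ m, ∀ b ∈ m, a < b → a + 2 ≤ b) ∧
  (∀ a ∈ m, ∀ b ∈ m, Even a → Even b → a < b → a + 4 ≤ b)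

/-- Number of even parts. -/
def evenCount (m : Multiset ℕ) : ℕ := (m.filter (fun a => Even a)).card

/-- Number of odd parts. -/
def oddCount (m : Multiset ℕ) : ℕ := (m.filter (fun a => Odd a)).card

lemma evenCount_cons (a : ℕ) (M : Multiset ℕ) :
    evenCount (a ::ₘ M) = evenCount M + (if Even a then 1 else 0) := by
  unfold evenCount
  rw [Multiset.filter_cons]
  split_ifs with h <;> simp [h]

lemma oddCount_cons (a : ℕ) (M : Multiset ℕ) :
    oddCount (a ::ₘ M) = oddCount M + (if Odd a then 1 else 0) := by
  unfold oddCount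
  rw [Multiset.filter_cons]
  split_ifs with h <;> simp [h]

lemma card_split (M : Multiset ℕ) : Multiset.card M = evenCount M + oddCount M := by
  induction M using Multiset.induction with
  | empty => simp [evenCount, oddCount]
  | cons a t ih =>
    rw [Multiset.card_cons, evenCount_cons, oddCount_cons, ih]
    rcases Nat.even_or_odd a with h | h
    · simp [h, Nat.not_odd_iff_even.2 h]; ring
    · simp [h, Nat.not_even_iff_odd.2 h]; ring

lemma sub2_count {M : Multiset ℕ} (h : ∀ x ∈ M, 3 ≤ x) (b : ℕ) :
    (M.map (· - 2)).count b = M.count (b + 2) := by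
  induction M using Multiset.induction with
  | empty => simp
  | cons a t ih =>
    have ha := h a (Multiset.mem_cons_self a t)
    rw [Multiset.map_cons, Multiset.count_cons, Multiset.count_cons,
      ih (fun x hx => h x (Multiset.mem_cons_of_mem hx))]
    congr 1
    have : (b = a - 2) ↔ (b + 2 = a) := by omega
    simp [this]

lemma sub2_sum {M : Multiset ℕ} (h : ∀ x ∈ M, 2 ≤ x) :
    (M.map (· - 2)).sum + 2 * Multiset.card M = M.sum := by
  induction M using Multiset.induction with
  | empty => simp
  | cons a t ih =>
    have ha := h a (Multiset.mem_cons_self a t)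
    have := ih (fun x hx => h x (Multiset.mem_cons_of_mem hx))
    rw [Multiset.map_cons, Multiset.sum_cons, Multiset.sum_cons, Multiset.card_cons]
    omega

lemma add2_sum (M : Multiset ℕ) :
    (M.map (· + 2)).sum = M.sum + 2 * Multiset.card M := by
  induction M using Multiset.induction with
  | empty => simp
  | cons a t ih =>
    rw [Multiset.map_cons, Multiset.sum_cons, Multiset.sum_cons, Multiset.card_cons, ih]
    ring

lemma sub2_even {M : Multiset ℕ} (h : ∀ x ∈ M, 2 ≤ x) :
    evenCount (M.map (· - 2)) = evenCount M := by
  induction M using Multiset.induction with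
  | empty => simp
  | cons a t ih =>
    have ha := h a (Multiset.mem_cons_self a t)
    have hpar : Even (a - 2) ↔ Even a := by
      rw [Nat.even_sub ha]; simp
    rw [Multiset.map_cons, evenCount_cons, evenCount_cons,
      ih (fun x hx => h x (Multiset.mem_cons_of_mem hx))]
    simp [hpar]

lemma sub2_odd {M : Multiset ℕ} (h : ∀ x ∈ M, 2 ≤ x) :
    oddCount (M.map (· - 2)) = oddCount M := by
  induction M using Multiset.induction with
  | empty => simp
  | cons a t ih =>
    have ha := h a (Multiset.mem_cons_self a t)
    have hpar : Odd (a - 2) ↔ Odd a := by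
      rw [← Nat.not_even_iff_odd, ← Nat.not_even_iff_odd, Nat.even_sub ha]; simp
    rw [Multiset.map_cons, oddCount_cons, oddCount_cons,
      ih (fun x hx => h x (Multiset.mem_cons_of_mem hx))]
    simp [hpar]

lemma add2_even (M : Multiset ℕ) : evenCount (M.map (· + 2)) = evenCount M := by
  induction M using Multiset.induction with
  | empty => simp
  | cons a t ih =>
    have hpar : Even (a + 2) ↔ Even a := by simp [Nat.even_add]
    rw [Multiset.map_cons, evenCount_cons, evenCount_cons, ih]
    simp [hpar]

lemma add2_odd (M : Multiset ℕ) : oddCount (M.map (· + 2)) = oddCount M := by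
  induction M using Multiset.induction with
  | empty => simp
  | cons a t ih =>
    have hpar : Odd (a + 2) ↔ Odd a := by
      rw [← Nat.not_even_iff_odd, ← Nat.not_even_iff_odd]; simp [Nat.even_add]
    rw [Multiset.map_cons, oddCount_cons, oddCount_cons, ih]
    simp [hpar]

lemma aux_ge3 {M : Multiset ℕ} {r s : ℕ} (hs : 1 ≤ s) (hpos : ∀ i ∈ M, 0 < i)
    (hr : evenCount M = r) (hd : distinctOddParts M) (he : minEvenGe M (2 * (r + s))) :
    ∀ x ∈ M.erase 1, 3 ≤ x := by
  intro x hx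
  have hxM : x ∈ M := Multiset.mem_of_mem_erase hx
  have h0 : 0 < x := hpos x hxM
  by_contra hlt
  push_neg at hlt
  interval_cases x
  · have h1 : 1 ≤ (M.erase 1).count 1 := Multiset.one_le_count_iff_mem.2 hx
    rw [Multiset.count_erase_self] at h1
    have := hd 1 (by decide)
    omega
  · have hr1 : 1 ≤ r := by
      rw [← hr]
      have : (2 : ℕ) ∈ M.filter (fun a => Even a) :=
        Multiset.mem_filter.2 ⟨hxM, by decide⟩
      exact Multiset.card_pos_iff_exists_mem.2 ⟨2, this⟩
    have := he 2 hxM (by decide)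
    omega

/-- Remove the part 1 and subtract 2 from every other part. -/
def fwdMul (M : Multiset ℕ) : Multiset ℕ := (M.erase 1).map (· - 2)

/-- Add 2 to every part and insert a part 1. -/
def bwdMul (M : Multiset ℕ) : Multiset ℕ := 1 ::ₘ M.map (· + 2)

lemma fwd_facts {r s n m : ℕ} (hs : 1 ≤ s) (hmn : m + 2 * (r + s) = n + 1)
    (p : n.Partition)
    (hp : evenCount p.parts = r ∧ oddCount p.parts = s ∧ distinctOddParts p.parts ∧
      minEvenGe p.parts (2 * (r + s)) ∧ (1 : ℕ) ∈ p.parts) :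
    (∀ i ∈ fwdMul p.parts, 0 < i) ∧ (fwdMul p.parts).sum = m ∧
      evenCount (fwdMul p.parts) = r ∧ oddCount (fwdMul p.parts) = s - 1 ∧
      distinctOddParts (fwdMul p.parts) ∧ minEvenGe (fwdMul p.parts) (2 * (r + s - 1)) ∧
      minOddGe (fwdMul p.parts) 1 := by
  obtain ⟨hr, hso, hd, he, h1⟩ := hp
  have hpos : ∀ i ∈ p.parts, 0 < i := fun i hi => p.parts_pos hi
  have hge3 : ∀ x ∈ p.parts.erase 1, 3 ≤ x := aux_ge3 hs hpos hr hd he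
  have hge2 : ∀ x ∈ p.parts.erase 1, 2 ≤ x := fun x hx => le_trans (by norm_num) (hge3 x hx)
  have hcons : (1 : ℕ) ::ₘ p.parts.erase 1 = p.parts := Multiset.cons_erase h1
  have hEsum : 1 + (p.parts.erase 1).sum = n := by
    rw [← Multiset.sum_cons, hcons, p.parts_sum]
  have hEcard : 1 + Multiset.card (p.parts.erase 1) = r + s := by
    have hc1 : Multiset.card p.parts = r + s := by rw [card_split, hr, hso]
    have hc2 : Multiset.card ((1 : ℕ) ::ₘ p.parts.erase 1) =
        Multiset.card (p.parts.erase 1) + 1 := Multiset.card_cons 1 _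
    rw [hcons] at hc2
    omega
  have hEeven : evenCount (p.parts.erase 1) = r := by
    have := evenCount_cons 1 (p.parts.erase 1)
    rw [hcons, hr] at this
    simpa using this.symm
  have hEodd : oddCount (p.parts.erase 1) + 1 = s := by
    have := oddCount_cons 1 (p.parts.erase 1)
    rw [hcons, hso] at this
    simp at this
    omega
  unfold fwdMul
  refine ⟨?_, ?_, ?_, ?_, ?_, ?_, ?_⟩
  · intro i hi
    obtain ⟨x, hx, rfl⟩ := Multiset.mem_map.1 hi
    have := hge3 x hx
    omega
  · have := sub2_sum hge2
    omega
  · rw [sub2_even hge2, hEeven]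
  · rw [sub2_odd hge2]
    omega
  · intro a ha
    rw [sub2_count hge3]
    have ha2 : Odd (a + 2) := by
      obtain ⟨k, hk⟩ := ha; exact ⟨k + 1, by omega⟩
    exact le_trans (Multiset.count_le_of_le _ (Multiset.erase_le 1 _)) (hd (a + 2) ha2)
  · intro a ha hae
    obtain ⟨x, hx, rfl⟩ := Multiset.mem_map.1 ha
    have h3 := hge3 x hx
    have hxe : Even x := by
      rw [Nat.even_sub (by omega : 2 ≤ x)] at hae
      simpa using hae
    have := he x (Multiset.mem_of_mem_erase hx) hxe
    omega
  · intro a ha _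
    obtain ⟨x, hx, rfl⟩ := Multiset.mem_map.1 ha
    have := hge3 x hx
    omega

lemma bwd_facts {r s n m : ℕ} (hs : 1 ≤ s) (hmn : m + 2 * (r + s) = n + 1)
    (q : m.Partition)
    (hq : evenCount q.parts = r ∧ oddCount q.parts = s - 1 ∧ distinctOddParts q.parts ∧
      minEvenGe q.parts (2 * (r + s - 1)) ∧ minOddGe q.parts 1) :
    (∀ i ∈ bwdMul q.parts, 0 < i) ∧ (bwdMul q.parts).sum = n ∧
      evenCount (bwdMul q.parts) = r ∧ oddCount (bwdMul q.parts) = s ∧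
      distinctOddParts (bwdMul q.parts) ∧ minEvenGe (bwdMul q.parts) (2 * (r + s)) ∧
      (1 : ℕ) ∈ bwdMul q.parts := by
  obtain ⟨hr, hso, hd, he, hodd1⟩ := hq
  have hinj : Function.Injective (· + 2 : ℕ → ℕ) := add_left_injective 2
  have hnot1 : (1 : ℕ) ∉ q.parts.map (· + 2) := by
    intro h
    obtain ⟨x, _, hx⟩ := Multiset.mem_map.1 h
    simp at hx
  have hcard : Multiset.card q.parts = r + (s - 1) := by
    rw [card_split, hr, hso]
  unfold bwdMul
  refine ⟨?_, ?_, ?_, ?_, ?_, ?_, ?_⟩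
  · intro i hi
    rcases Multiset.mem_cons.1 hi with h | h
    · omega
    · obtain ⟨x, _, rfl⟩ := Multiset.mem_map.1 h
      omega
  · rw [Multiset.sum_cons, add2_sum, q.parts_sum, hcard]
    omega
  · rw [evenCount_cons, add2_even, hr]
    norm_num
  · rw [oddCount_cons, add2_odd, hso]
    simp
    omega
  · intro a ha
    rw [Multiset.count_cons]
    by_cases h1 : a = 1
    · subst h1
      have h0 : (q.parts.map (· + 2)).count 1 = 0 := Multiset.count_eq_zero.2 hnot1
      simp [h0]
    · have ha3 : 3 ≤ a := by
        obtain ⟨k, hk⟩ := ha; omega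
      have hsplit : a = (a - 2) + 2 := by omega
      rw [hsplit, Multiset.count_map_eq_count' _ _ hinj]
      have hodd : Odd (a - 2) := by
        obtain ⟨k, hk⟩ := ha
        exact ⟨k - 1, by omega⟩
      have := hd (a - 2) hodd
      have h1' : (a - 2) + 2 ≠ 1 := by omega
      simp [h1']
      omega
  · intro a ha hae
    rcases Multiset.mem_cons.1 ha with h | h
    · subst h
      exact absurd hae (by decide)
    · obtain ⟨x, hx, rfl⟩ := Multiset.mem_map.1 h
      have hxe : Even x := by
        rw [Nat.even_add] at hae
        simpa using hae
      have := he x hx hxe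
      omega
  · exact Multiset.mem_cons_self 1 _

theorem bijection_remove_one (r s n : ℕ) (hs : 1 ≤ s) (m : ℕ)
    (hm : (m : ℤ) = (n : ℤ) - 2 * ((r : ℤ) + s) + 1) :
    ∃ e : {p : n.Partition // evenCount p.parts = r ∧ oddCount p.parts = s ∧
            distinctOddParts p.parts ∧ minEvenGe p.parts (2 * (r + s)) ∧
            (1 : ℕ) ∈ p.parts} ≃
          {q : m.Partition // evenCount q.parts = r ∧ oddCount q.parts = s - 1 ∧
            distinctOddParts q.parts ∧ minEvenGe q.parts (2 * (r + s - 1)) ∧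
            minOddGe q.parts 1},
      ∀ p, (e p).1.parts = (p.1.parts.erase 1).map (· - 2) := by
  have hmn : m + 2 * (r + s) = n + 1 := by omega
  refine ⟨{ toFun := fun p =>
              ⟨⟨fwdMul p.1.parts, fun hi => (fwd_facts hs hmn p.1 p.2).1 _ hi,
                (fwd_facts hs hmn p.1 p.2).2.1⟩, (fwd_facts hs hmn p.1 p.2).2.2⟩,
            invFun := fun q =>
              ⟨⟨bwdMul q.1.parts, fun hi => (bwd_facts hs hmn q.1 q.2).1 _ hi,
                (bwd_facts hs hmn q.1 q.2).2.1⟩, (bwd_facts hs hmn q.1 q.2).2.2⟩,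
            left_inv := ?_, right_inv := ?_ }, fun p => rfl⟩
  · intro p
    obtain ⟨hr, hso, hd, he, h1⟩ := p.2
    have hpos : ∀ i ∈ p.1.parts, 0 < i := fun i hi => p.1.parts_pos hi
    have hge3 : ∀ x ∈ p.1.parts.erase 1, 3 ≤ x := aux_ge3 hs hpos hr hd he
    apply Subtype.ext
    apply Nat.Partition.ext
    show bwdMul (fwdMul p.1.parts) = p.1.parts
    unfold bwdMul fwdMul
    rw [Multiset.map_map]
    have hid : (p.1.parts.erase 1).map ((· + 2) ∘ (· - 2)) = p.1.parts.erase 1 := by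
      nth_rewrite 2 [← Multiset.map_id (p.1.parts.erase 1)]
      apply Multiset.map_congr rfl
      intro x hx
      have := hge3 x hx
      simp only [Function.comp_apply, id]
      omega
    rw [hid, Multiset.cons_erase h1]
  · intro q
    apply Subtype.ext
    apply Nat.Partition.ext
    show fwdMul (bwdMul q.1.parts) = q.1.parts
    unfold bwdMul fwdMul
    rw [Multiset.erase_cons_head, Multiset.map_map]
    nth_rewrite 2 [← Multiset.map_id q.1.parts]
    apply Multiset.map_congr rfl
    intro x _
    simp
end

section
/- There is a bijection between partitions of n with exactly r ≥ 1 even parts and s odd parts, with no two parts equal or consecutive, no two even parts equal or consecutive, smallest odd part ≥ 3, and smallest even part equal to 2, and partitions of n−4(r+s)+2 with exactly r−1 even parts and s odd parts satisfying the same difference conditions with all parts ≥ 1; the bijection removes the part 2 and subtracts 4 from every remaining part. -/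
/-!
If `p` satisfies the gap conditions and contains `2`, then every other part `a` is at least `4`
(`a ∉ {0, 1, 2, 3}` because of its distance to `2`), so `p = 2 ::ₘ t.map (· + 4)` with
`t = (p.erase 2).map (· - 4)`. Conversely, shifting all parts by the even number `4` preserves
parities and the gap conditions, and inserting `2` keeps them exactly when `t` has no part `0`.
Each of the `r + s - 1` parts of `t` loses `4` and the part `2` disappears, whence the weight
`n - 4(r + s) + 2`.
-/

open Multiset

lemma card_eq_evenCount_add_oddCount (t : Multiset ℕ) :
    card t = evenCount t + oddCount t := by
  conv_lhs => rw [← filter_add_not (fun a : ℕ => Even a) t]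
  simp only [card_add, Nat.not_even_iff_odd, evenCount, oddCount]

lemma evenCount_map_add {k : ℕ} (hk : Even k) (t : Multiset ℕ) :
    evenCount (t.map (· + k)) = evenCount t := by
  simp [evenCount, filter_map, Nat.even_add, hk]

lemma oddCount_map_add {k : ℕ} (hk : Even k) (t : Multiset ℕ) :
    oddCount (t.map (· + k)) = oddCount t := by
  simp [oddCount, filter_map, Nat.odd_add, hk]

lemma gapCond_iff_nodup {t : Multiset ℕ} :
    gapCond t ↔ t.Nodup ∧ (∀ a ∈ t, ∀ b ∈ t, a < b → a + 2 ≤ b) ∧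
      (∀ a ∈ t, ∀ b ∈ t, Even a → Even b → a < b → a + 4 ≤ b) := by
  rw [gapCond, nodup_iff_count_le_one]

lemma gapCond_map_add_iff {k : ℕ} (hk : Even k) {t : Multiset ℕ} :
    gapCond (t.map (· + k)) ↔ gapCond t := by
  simp only [gapCond_iff_nodup, nodup_map_iff_of_injective (add_left_injective k),
    forall_mem_map_iff, Nat.even_add, hk, iff_true, add_lt_add_iff_right, add_right_comm _ k,
    add_le_add_iff_right]

lemma gapCond_cons_iff {a : ℕ} {u : Multiset ℕ} :
    gapCond (a ::ₘ u) ↔ gapCond u ∧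
      ∀ b ∈ u, (a + 2 ≤ b ∨ b + 2 ≤ a) ∧ (Even a → Even b → a + 4 ≤ b ∨ b + 4 ≤ a) := by
  simp only [gapCond_iff_nodup, nodup_cons, forall_mem_cons, lt_irrefl, IsEmpty.forall_iff,
    imp_true_iff, true_and]
  grind

def shiftUpInsertTwo (t : Multiset ℕ) : Multiset ℕ := 2 ::ₘ t.map (· + 4)

def eraseTwoShiftDown (p : Multiset ℕ) : Multiset ℕ := (p.erase 2).map (· - 4)

lemma eraseTwoShiftDown_shiftUpInsertTwo (t : Multiset ℕ) :
    eraseTwoShiftDown (shiftUpInsertTwo t) = t := by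
  simp [eraseTwoShiftDown, shiftUpInsertTwo]

lemma shiftUpInsertTwo_eraseTwoShiftDown {p : Multiset ℕ} (hp : gapCond p) (h2 : 2 ∈ p) :
    shiftUpInsertTwo (eraseTwoShiftDown p) = p := by
  have hge : ∀ a ∈ p.erase 2, 4 ≤ a := by
    obtain ⟨-, hgap⟩ := gapCond_cons_iff.1 (cons_erase h2 ▸ hp)
    intro a ha
    have := hgap a ha
    grind
  conv_rhs => rw [← cons_erase h2]
  rw [shiftUpInsertTwo, eraseTwoShiftDown, map_map]
  congr 1
  refine (map_congr rfl fun a ha => ?_).trans (map_id _)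
  have := hge a ha
  simp only [Function.comp_apply, id]
  omega

lemma evenCount_shiftUpInsertTwo (t : Multiset ℕ) :
    evenCount (shiftUpInsertTwo t) = evenCount t + 1 := by
  rw [shiftUpInsertTwo, evenCount, filter_cons_of_pos _ even_two, card_cons, ← evenCount,
    evenCount_map_add (by decide)]

lemma oddCount_shiftUpInsertTwo (t : Multiset ℕ) :
    oddCount (shiftUpInsertTwo t) = oddCount t := by
  rw [shiftUpInsertTwo, oddCount, filter_cons_of_neg _ (by decide), ← oddCount,
    oddCount_map_add (by decide)]

lemma sum_shiftUpInsertTwo (t : Multiset ℕ) :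
    (shiftUpInsertTwo t).sum = t.sum + 4 * (evenCount t + oddCount t) + 2 := by
  simp [shiftUpInsertTwo, sum_map_add, ← card_eq_evenCount_add_oddCount]
  ring

lemma gapCond_shiftUpInsertTwo_iff {t : Multiset ℕ} :
    gapCond (shiftUpInsertTwo t) ↔ gapCond t ∧ ∀ a ∈ t, 1 ≤ a := by
  rw [shiftUpInsertTwo, gapCond_cons_iff, gapCond_map_add_iff (by decide), forall_mem_map_iff]
  grind

lemma minOddGe_shiftUpInsertTwo (t : Multiset ℕ) : minOddGe (shiftUpInsertTwo t) 3 := by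
  simp [minOddGe, shiftUpInsertTwo]

lemma pos_of_mem_shiftUpInsertTwo {t : Multiset ℕ} {a : ℕ} (ha : a ∈ shiftUpInsertTwo t) :
    0 < a := by
  simp [shiftUpInsertTwo] at ha
  omega

theorem Nat.Partition.exists_equiv_of_parts {n m : ℕ} {P : n.Partition → Prop}
    {Q : m.Partition → Prop} (f g : Multiset ℕ → Multiset ℕ)
    (hf : ∀ p, P p → ∃ q, Q q ∧ q.parts = f p.parts)
    (hg : ∀ q, Q q → ∃ p, P p ∧ p.parts = g q.parts)
    (hgf : ∀ p, P p → g (f p.parts) = p.parts) (hfg : ∀ q, Q q → f (g q.parts) = q.parts) :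
    ∃ e : {p // P p} ≃ {q // Q q}, ∀ p, (e p).1.parts = f p.1.parts := by
  choose F hFQ hF using hf
  choose G hGP hG using hg
  refine ⟨⟨fun p => ⟨F p p.2, hFQ p p.2⟩, fun q => ⟨G q q.2, hGP q q.2⟩, fun p => ?_,
    fun q => ?_⟩, fun p => hF p p.2⟩
  · exact Subtype.ext (Nat.Partition.ext (by rw [hG, hF, hgf p p.2]))
  · exact Subtype.ext (Nat.Partition.ext (by rw [hF, hG, hfg q q.2]))

theorem bijection_remove_two (r s n : ℕ) (hr : 1 ≤ r) (m : ℕ)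
    (hm : (m : ℤ) = (n : ℤ) - 4 * ((r : ℤ) + s) + 2) :
    ∃ e : {p : n.Partition // evenCount p.parts = r ∧ oddCount p.parts = s ∧
            gapCond p.parts ∧ minOddGe p.parts 3 ∧ (2 : ℕ) ∈ p.parts} ≃
          {q : m.Partition // evenCount q.parts = r - 1 ∧ oddCount q.parts = s ∧
            gapCond q.parts ∧ (∀ a ∈ q.parts, 1 ≤ a)},
      ∀ p, (e p).1.parts = (p.1.parts.erase 2).map (· - 4) := by
  refine Nat.Partition.exists_equiv_of_parts eraseTwoShiftDown shiftUpInsertTwo ?_ ?_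
    (fun p hp => shiftUpInsertTwo_eraseTwoShiftDown hp.2.2.1 hp.2.2.2.2)
    (fun q _ => eraseTwoShiftDown_shiftUpInsertTwo q.parts)
  · rintro ⟨p, _, hsum⟩ ⟨he, ho, hgap, -, h2⟩
    obtain ⟨t, rfl⟩ : ∃ t, p = shiftUpInsertTwo t :=
      ⟨_, (shiftUpInsertTwo_eraseTwoShiftDown hgap h2).symm⟩
    rw [evenCount_shiftUpInsertTwo] at he
    rw [oddCount_shiftUpInsertTwo] at ho
    rw [sum_shiftUpInsertTwo] at hsum
    obtain ⟨hgap, hpos⟩ := gapCond_shiftUpInsertTwo_iff.1 hgap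
    refine ⟨⟨t, hpos _, ?_⟩, ⟨?_, ho, hgap, hpos⟩, (eraseTwoShiftDown_shiftUpInsertTwo t).symm⟩
    · omega
    · dsimp only
      omega
  · rintro q ⟨he, ho, hgap, hpos⟩
    have hsum := q.parts_sum
    refine ⟨⟨shiftUpInsertTwo q.parts, pos_of_mem_shiftUpInsertTwo, ?_⟩,
      ⟨?_, ?_, gapCond_shiftUpInsertTwo_iff.2 ⟨hgap, hpos⟩, minOddGe_shiftUpInsertTwo _,
        mem_cons_self 2 _⟩, rfl⟩
    · rw [sum_shiftUpInsertTwo]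
      omega
    · simp only [evenCount_shiftUpInsertTwo]
      omega
    · simp only [oddCount_shiftUpInsertTwo, ho]
end

section
/- Subtracting 2 from every part gives a bijection between partitions of n with exactly r even and s odd parts, all parts ≥ 3, parts pairwise differing by at least 2, even parts pairwise differing by at least 4, and partitions of n−2(r+s) with exactly r even and s odd parts, all parts ≥ 1, parts pairwise differing by at least 2, and even parts pairwise differing by at least 4. -/
open Multiset

lemma evenCount_add_oddCount (m : Multiset ℕ) : evenCount m + oddCount m = m.card := by
  unfold evenCount oddCount
  rw [← card_add]
  congr 1
  have : (m.filter (fun a => Odd a)) = m.filter (fun a => ¬ Even a) :=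
    filter_congr (fun x _ => by rw [Nat.odd_iff, Nat.even_iff]; omega)
  rw [this, filter_add_not]

lemma two_mul_card_le_sum (m : Multiset ℕ) (h : ∀ a ∈ m, 2 ≤ a) : 2 * m.card ≤ m.sum := by
  induction m using Multiset.induction with
  | empty => simp
  | cons a t ih =>
    have ha : 2 ≤ a := h a (mem_cons_self a t)
    have := ih (fun x hx => h x (mem_cons_of_mem hx))
    simp only [sum_cons, card_cons]
    omega

lemma sum_map_add_two (m : Multiset ℕ) : (m.map (· + 2)).sum = m.sum + 2 * m.card := by
  induction m using Multiset.induction with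
  | empty => simp
  | cons a t ih => simp [ih]; ring

lemma sum_map_sub_two (m : Multiset ℕ) (h : ∀ a ∈ m, 2 ≤ a) :
    (m.map (· - 2)).sum = m.sum - 2 * m.card := by
  induction m using Multiset.induction with
  | empty => simp
  | cons a t ih =>
    have ha : 2 ≤ a := h a (mem_cons_self a t)
    have ht : ∀ a ∈ t, 2 ≤ a := fun x hx => h x (mem_cons_of_mem hx)
    have hts := two_mul_card_le_sum t ht
    simp only [map_cons, sum_cons, card_cons, ih ht]
    omega

lemma evenCount_map_add_two (m : Multiset ℕ) : evenCount (m.map (· + 2)) = evenCount m := by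
  unfold evenCount
  rw [filter_map, card_map]
  congr 1
  refine filter_congr (fun x _ => ?_)
  simp only [Function.comp_apply, Nat.even_iff]
  omega

lemma oddCount_map_add_two (m : Multiset ℕ) : oddCount (m.map (· + 2)) = oddCount m := by
  unfold oddCount
  rw [filter_map, card_map]
  congr 1
  refine filter_congr (fun x _ => ?_)
  simp only [Function.comp_apply, Nat.odd_iff]
  omega

lemma evenCount_map_sub_two (m : Multiset ℕ) (h : ∀ a ∈ m, 2 ≤ a) :
    evenCount (m.map (· - 2)) = evenCount m := by
  unfold evenCount
  rw [filter_map, card_map]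
  congr 1
  refine filter_congr (fun x hx => ?_)
  have := h x hx
  simp only [Function.comp_apply, Nat.even_iff]
  omega

lemma oddCount_map_sub_two (m : Multiset ℕ) (h : ∀ a ∈ m, 2 ≤ a) :
    oddCount (m.map (· - 2)) = oddCount m := by
  unfold oddCount
  rw [filter_map, card_map]
  congr 1
  refine filter_congr (fun x hx => ?_)
  have := h x hx
  simp only [Function.comp_apply, Nat.odd_iff]
  omega

lemma gapCond_map_add_two (m : Multiset ℕ) (hg : gapCond m) : gapCond (m.map (· + 2)) := by
  obtain ⟨h1, h2, h3⟩ := hg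
  refine ⟨?_, ?_, ?_⟩
  · rw [← nodup_iff_count_le_one] at h1 ⊢
    exact h1.map_on (fun x _ y _ hxy => by omega)
  · rintro a ha b hb hab
    obtain ⟨x, hx, rfl⟩ := mem_map.mp ha
    obtain ⟨y, hy, rfl⟩ := mem_map.mp hb
    have := h2 x hx y hy (by omega)
    omega
  · rintro a ha b hb hea heb hab
    obtain ⟨x, hx, rfl⟩ := mem_map.mp ha
    obtain ⟨y, hy, rfl⟩ := mem_map.mp hb
    rw [Nat.even_add] at hea heb
    have := h3 x hx y hy (by simpa using hea) (by simpa using heb) (by omega)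
    omega

lemma gapCond_map_sub_two (m : Multiset ℕ) (hm : ∀ a ∈ m, 2 ≤ a) (hg : gapCond m) :
    gapCond (m.map (· - 2)) := by
  obtain ⟨h1, h2, h3⟩ := hg
  refine ⟨?_, ?_, ?_⟩
  · rw [← nodup_iff_count_le_one] at h1 ⊢
    exact h1.map_on (fun x hx y hy hxy => by have := hm x hx; have := hm y hy; omega)
  · rintro a ha b hb hab
    obtain ⟨x, hx, rfl⟩ := mem_map.mp ha
    obtain ⟨y, hy, rfl⟩ := mem_map.mp hb
    have hx2 := hm x hx; have hy2 := hm y hy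
    have := h2 x hx y hy (by omega)
    omega
  · rintro a ha b hb hea heb hab
    obtain ⟨x, hx, rfl⟩ := mem_map.mp ha
    obtain ⟨y, hy, rfl⟩ := mem_map.mp hb
    have hx2 := hm x hx; have hy2 := hm y hy
    rw [Nat.even_sub hx2] at hea
    rw [Nat.even_sub hy2] at heb
    have := h3 x hx y hy (by simpa [Nat.even_iff] using hea)
      (by simpa [Nat.even_iff] using heb) (by omega)
    omega

lemma card_eq_of_counts (m : Multiset ℕ) (r s : ℕ) (hr : evenCount m = r)
    (hs : oddCount m = s) : m.card = r + s := by
  rw [← hr, ← hs]; exact (evenCount_add_oddCount m).symm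

lemma map_sub_add_two (m : Multiset ℕ) (h : ∀ a ∈ m, 2 ≤ a) :
    (m.map (· - 2)).map (· + 2) = m := by
  rw [Multiset.map_map]
  exact (Multiset.map_congr rfl (fun x hx => by have := h x hx; simp; omega)).trans
    (Multiset.map_id m)

lemma map_add_sub_two (m : Multiset ℕ) : (m.map (· + 2)).map (· - 2) = m := by
  rw [Multiset.map_map]
  exact (Multiset.map_congr rfl (fun x _ => by simp)).trans (Multiset.map_id m)

theorem bijection_subtract_two (r s n : ℕ) (h : 2 * (r + s) ≤ n) :
    ∃ e : {p : n.Partition // evenCount p.parts = r ∧ oddCount p.parts = s ∧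
            (∀ a ∈ p.parts, 3 ≤ a) ∧ gapCond p.parts} ≃
          {q : (n - 2 * (r + s)).Partition // evenCount q.parts = r ∧
            oddCount q.parts = s ∧ (∀ a ∈ q.parts, 1 ≤ a) ∧ gapCond q.parts},
      ∀ p, (e p).1.parts = p.1.parts.map (· - 2) := by
  classical
  refine ⟨⟨fun p => ⟨⟨p.1.parts.map (· - 2), ?_, ?_⟩, ?_, ?_, ?_, ?_⟩,
          fun q => ⟨⟨q.1.parts.map (· + 2), ?_, ?_⟩, ?_, ?_, ?_, ?_⟩, ?_, ?_⟩,
          fun p => rfl⟩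
  · -- positivity of p.parts.map (· - 2)
    intro a ha
    obtain ⟨x, hx, rfl⟩ := mem_map.mp ha
    have := p.2.2.2.1 x hx
    omega
  · -- sum
    have h2 : ∀ a ∈ p.1.parts, 2 ≤ a := fun a ha => by have := p.2.2.2.1 a ha; omega
    rw [sum_map_sub_two _ h2, p.1.parts_sum,
      card_eq_of_counts _ r s p.2.1 p.2.2.1]
  · rw [evenCount_map_sub_two _ (fun a ha => by have := p.2.2.2.1 a ha; omega)]
    exact p.2.1
  · rw [oddCount_map_sub_two _ (fun a ha => by have := p.2.2.2.1 a ha; omega)]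
    exact p.2.2.1
  · intro a ha
    obtain ⟨x, hx, rfl⟩ := mem_map.mp ha
    have := p.2.2.2.1 x hx
    omega
  · exact gapCond_map_sub_two _ (fun a ha => by have := p.2.2.2.1 a ha; omega) p.2.2.2.2
  · -- positivity of q.parts.map (· + 2)
    intro a ha
    obtain ⟨x, hx, rfl⟩ := mem_map.mp ha
    omega
  · rw [sum_map_add_two, q.1.parts_sum, card_eq_of_counts _ r s q.2.1 q.2.2.1]
    exact Nat.sub_add_cancel h
  · rw [evenCount_map_add_two]; exact q.2.1
  · rw [oddCount_map_add_two]; exact q.2.2.1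
  · intro a ha
    obtain ⟨x, hx, rfl⟩ := mem_map.mp ha
    have := q.2.2.2.1 x hx
    omega
  · exact gapCond_map_add_two _ q.2.2.2.2
  · -- left inverse
    intro p
    apply Subtype.ext
    apply Nat.Partition.ext
    exact map_sub_add_two _ (fun a ha => by have := p.2.2.2.1 a ha; omega)
  · -- right inverse
    intro q
    apply Subtype.ext
    apply Nat.Partition.ext
    exact map_add_sub_two _
end
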